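/- arXiv:2311.14151 — 6 statements merged into one kernel-verified Lean document; each statement's English description precedes it below -/
import Mathlib

section
/- If T is a power bounded operator on a normed space X, then strong quasistability is equivalent to strong stability: liminf_{n→∞} ‖T^n x‖ = 0 for every x ∈ X if and only if lim_{n→∞} ‖T^n x‖ = 0 for every x ∈ X. -/
/-! Power boundedness gives `‖T^m x‖ ≤ C ‖T^n x‖` for `m ≥ n`, so once the orbit of `x` comes
within `ε / C` of `0` it stays within `ε` forever after. -/

open Filter Topology

theorem ContinuousLinearMap.norm_pow_apply_le_mul_of_le {𝕜 X : Type*} [NontriviallyNormedField 𝕜]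
    [SeminormedAddCommGroup X] [NormedSpace 𝕜 X] {T : X →L[𝕜] X} {C : ℝ}
    (hC : ∀ n : ℕ, ‖T ^ n‖ ≤ C) (x : X) {n m : ℕ} (hnm : n ≤ m) :
    ‖(T ^ m) x‖ ≤ C * ‖(T ^ n) x‖ := by
  calc ‖(T ^ m) x‖ = ‖(T ^ (m - n)) ((T ^ n) x)‖ := by
        rw [← mul_apply_eq_comp, pow_sub_mul_pow T hnm]
    _ ≤ ‖T ^ (m - n)‖ * ‖(T ^ n) x‖ := (T ^ (m - n)).le_opNorm _
    _ ≤ C * ‖(T ^ n) x‖ := mul_le_mul_of_nonneg_right (hC _) (norm_nonneg _)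

theorem tendsto_zero_of_liminf_eq_zero_of_le_mul {u : ℕ → ℝ} {C : ℝ} (hu : ∀ n, 0 ≤ u n)
    (hC : ∀ n m, n ≤ m → u m ≤ C * u n) (h : liminf u atTop = 0) :
    Tendsto u atTop (𝓝 0) := by
  have hcobdd : IsCoboundedUnder (· ≥ ·) atTop u :=
    isCoboundedUnder_ge_of_eventually_le atTop (Eventually.of_forall fun m => hC 0 m m.zero_le)
  refine tendsto_order.2 ⟨fun a ha => Eventually.of_forall fun n => ha.trans_le (hu n), ?_⟩
  intro ε hε
  have hK : 0 < |C| + 1 := by positivity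
  have hsmall : liminf u atTop < ε / (|C| + 1) := h ▸ div_pos hε hK
  obtain ⟨N, -, hN⟩ := frequently_atTop.1 (frequently_lt_of_liminf_lt hcobdd hsmall) 0
  filter_upwards [eventually_ge_atTop N] with m hm
  calc u m ≤ C * u N := hC N m hm
    _ ≤ (|C| + 1) * u N := mul_le_mul_of_nonneg_right ((le_abs_self C).trans (by linarith)) (hu N)
    _ < (|C| + 1) * (ε / (|C| + 1)) := mul_lt_mul_of_pos_left hN hK
    _ = ε := mul_div_cancel₀ ε hK.ne'

/-- **Proposition 4.2.** If `T` is a power bounded operator on a normed space `X`, then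
strong quasistability is equivalent to strong stability:
`liminf_n ‖T^n x‖ = 0` for every `x ∈ X` iff `lim_n ‖T^n x‖ = 0` for every `x ∈ X`. -/
theorem strong_quasistability_iff_strong_stability {𝕜 X : Type*} [RCLike 𝕜]
    [NormedAddCommGroup X] [NormedSpace 𝕜 X] (T : X →L[𝕜] X)
    (hpb : ∃ C : ℝ, ∀ n : ℕ, ‖T ^ n‖ ≤ C) :
    (∀ x : X, Filter.liminf (fun n : ℕ => ‖(T ^ n) x‖) Filter.atTop = 0) ↔
      (∀ x : X, Filter.Tendsto (fun n : ℕ => ‖(T ^ n) x‖) Filter.atTop (nhds 0)) := by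
  obtain ⟨C, hC⟩ := hpb
  refine ⟨fun h x => ?_, fun h x => (h x).liminf_eq⟩
  exact tendsto_zero_of_liminf_eq_zero_of_le_mul (fun n => norm_nonneg _)
    (fun n m hnm => T.norm_pow_apply_le_mul_of_le hC x hnm) (h x)
end

section
/- Let T be a bounded linear operator on a normed space X, let x ∈ X, and suppose {T^{n_k}} is a boundedly spaced subsequence of {T^n}, i.e., {n_k} is strictly increasing with sup_k (n_{k+1} − n_k) < ∞. If the sequence {T^{n_k} x} converges weakly to zero (f(T^{n_k} x) → 0 for every f ∈ X*), then the whole sequence {T^n x} converges weakly to zero (f(T^n x) → 0 for every f ∈ X*). -/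
/-!
Write a large `m` as `j + n k` with `k` large and `j` below the gap bound `M`. For each of the
finitely many `j < M`, `f ∘ T ^ j` is again a functional, so `f (T ^ (j + n k) x) → 0` as
`k → ∞`, and with only finitely many `j` this convergence is uniform in `j`.
-/

open Filter

lemma StrictMono.exists_mem_Ico_of_le {n : ℕ → ℕ} (hn : StrictMono n) {K m : ℕ}
    (hm : n K ≤ m) : ∃ k ≥ K, n k ≤ m ∧ m < n (k + 1) := by
  induction m, hm using Nat.le_induction with
  | base => exact ⟨K, le_rfl, le_rfl, hn K.lt_succ_self⟩
  | succ m _ ih =>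
    obtain ⟨k, hKk, hkm, hmk⟩ := ih
    rcases (Nat.succ_le_of_lt hmk).lt_or_eq with hlt | heq
    · exact ⟨k, hKk, hkm.trans m.le_succ, hlt⟩
    · exact ⟨k + 1, hKk.trans k.le_succ, heq.ge, heq.trans_lt (hn (k + 1).lt_succ_self)⟩

lemma Filter.tendsto_atTop_of_tendsto_shifts_of_strictMono {α : Type*} {u : ℕ → α}
    {l : Filter α} {n : ℕ → ℕ} (hn : StrictMono n) {M : ℕ}
    (hM : ∀ k, n (k + 1) - n k ≤ M)
    (hu : ∀ j < M, Tendsto (fun k => u (j + n k)) atTop l) :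
    Tendsto u atTop l := by
  intro s hs
  have hshift : ∀ᶠ k in atTop, ∀ j ∈ Finset.range M, u (j + n k) ∈ s :=
    (eventually_all_finset _).2 fun j hj => hu j (Finset.mem_range.1 hj) hs
  obtain ⟨K, hK⟩ := eventually_atTop.1 hshift
  refine eventually_atTop.2 ⟨n K, fun m hm => ?_⟩
  obtain ⟨k, hKk, hkm, hmk⟩ := hn.exists_mem_Ico_of_le hm
  have hj : m - n k < M := by have := hM k; omega
  simpa [Nat.sub_add_cancel hkm] using hK k hKk (m - n k) (Finset.mem_range.2 hj)

/-- **Lemma 5.2.** Let `T` be a bounded linear operator on a normed space `X`, let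
`x ∈ X`, and suppose `{T^{n_k}}` is a boundedly spaced subsequence of `{T^n}`, i.e.
`{n_k}` is strictly increasing with `sup_k (n_{k+1} - n_k) < ∞`. If `{T^{n_k} x}`
converges weakly to zero, then `{T^n x}` converges weakly to zero. -/
theorem weak_stability_along_boundedly_spaced_subsequence {𝕜 X : Type*} [RCLike 𝕜]
    [NormedAddCommGroup X] [NormedSpace 𝕜 X] (T : X →L[𝕜] X) (x : X)
    (n : ℕ → ℕ) (hmono : StrictMono n) (hbdd : ∃ M : ℕ, ∀ k, n (k + 1) - n k ≤ M)
    (h : ∀ f : X →L[𝕜] 𝕜,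
      Filter.Tendsto (fun k => f ((T ^ n k) x)) Filter.atTop (nhds 0)) :
    ∀ f : X →L[𝕜] 𝕜,
      Filter.Tendsto (fun m => f ((T ^ m) x)) Filter.atTop (nhds 0) := by
  intro f
  obtain ⟨M, hM⟩ := hbdd
  refine tendsto_atTop_of_tendsto_shifts_of_strictMono hmono hM fun j _ => ?_
  simpa only [pow_add, mul_apply_eq_comp, ContinuousLinearMap.comp_apply] using h (f.comp (T ^ j))
end

section
/- Let T be a bounded linear operator on a normed space X. If for every x ∈ X there exists a strictly increasing sequence of positive integers {n_k} (depending on x) with sup_k (n_{k+1} − n_k) < ∞ such that f(T^{n_k} x) → 0 for every f ∈ X*, then T is weakly stable, i.e., lim_{n→∞} f(T^n x) = 0 for every x ∈ X and every f ∈ X*. -/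
/-!
Every large time `m` lies at most `M` steps after some `n k`, so `T ^ m x = T ^ j (T ^ (n k) x)`
with `j ≤ M`. Applying the hypothesis to the finitely many functionals `f ∘ T ^ j`, `j ≤ M`,
makes `f (T ^ m x)` small uniformly in the shift `j`.
-/

open Filter

theorem StrictMono.exists_le_apply_le_sub_le {n : ℕ → ℕ} (hn : StrictMono n) {M : ℕ}
    (hM : ∀ k, n (k + 1) - n k ≤ M) {K m : ℕ} (hm : n K ≤ m) :
    ∃ k, K ≤ k ∧ n k ≤ m ∧ m - n k ≤ M := by
  induction m, hm using Nat.le_induction with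
  | base => exact ⟨K, le_rfl, le_rfl, by omega⟩
  | succ m _ ih =>
    obtain ⟨k, hKk, hkm, hmk⟩ := ih
    have hstep : n k < n (k + 1) := hn k.lt_succ_self
    by_cases hnext : n (k + 1) ≤ m + 1
    · exact ⟨k + 1, by omega, hnext, by omega⟩
    · exact ⟨k, hKk, by omega, by have := hM k; omega⟩

theorem Filter.tendsto_of_tendsto_add_apply_of_bounded_gaps {α : Type*} {l : Filter α}
    {u : ℕ → α} {n : ℕ → ℕ} (hn : StrictMono n) {M : ℕ} (hM : ∀ k, n (k + 1) - n k ≤ M)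
    (hu : ∀ j ≤ M, Tendsto (fun k => u (j + n k)) atTop l) : Tendsto u atTop l := by
  intro s hs
  have hshifts : ∀ᶠ k in atTop, ∀ j ∈ Finset.range (M + 1), u (j + n k) ∈ s :=
    (eventually_all_finset _).2 fun j hj => hu j (Nat.lt_succ_iff.1 (Finset.mem_range.1 hj)) hs
  obtain ⟨K, hK⟩ := eventually_atTop.1 hshifts
  refine eventually_atTop.2 ⟨n K, fun m hm => ?_⟩
  obtain ⟨k, hKk, hkm, hmk⟩ := hn.exists_le_apply_le_sub_le hM hm
  have hsplit : m - n k + n k = m := Nat.sub_add_cancel hkm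
  simpa only [hsplit] using hK k hKk (m - n k) (Finset.mem_range.2 (Nat.lt_succ_of_le hmk))

/-- **Theorem 5.3.** If a bounded linear operator `T` on a normed space `X` has a
boundedly spaced subsequence of weak quasistability for every `x ∈ X`, then `T` is
weakly stable. -/
theorem weakly_stable_of_boundedly_spaced_weak_quasistability {𝕜 X : Type*} [RCLike 𝕜]
    [NormedAddCommGroup X] [NormedSpace 𝕜 X] (T : X →L[𝕜] X)
    (h : ∀ x : X, ∃ n : ℕ → ℕ, StrictMono n ∧ (∃ M : ℕ, ∀ k, n (k + 1) - n k ≤ M) ∧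
      ∀ f : X →L[𝕜] 𝕜,
        Filter.Tendsto (fun k => f ((T ^ n k) x)) Filter.atTop (nhds 0)) :
    ∀ (x : X) (f : X →L[𝕜] 𝕜),
      Filter.Tendsto (fun m => f ((T ^ m) x)) Filter.atTop (nhds 0) := by
  intro x f
  obtain ⟨n, hn, ⟨M, hM⟩, hweak⟩ := h x
  refine tendsto_of_tendsto_add_apply_of_bounded_gaps hn hM fun j _ => ?_
  simpa only [pow_add, mul_apply_eq_comp, ContinuousLinearMap.comp_apply] using hweak (f.comp (T ^ j))
end

section
/- Let T be a power bounded operator on a normed space X and let D ⊆ X be a dense subset such that liminf_{n→∞} |f(T^n y)| = 0 for every y ∈ D and every f ∈ X*. Then liminf_{n→∞} |f(T^n x)| = 0 for every x ∈ X and every f ∈ X*, i.e., T is weakly quasistable. -/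
/-!
For a functional `f` and an operator `T` with `‖T ^ n‖ ≤ C`, the map
`x ↦ liminf_n ‖f (T ^ n x)‖` is `‖f‖ C`-Lipschitz, since the sequences for `x` and `y` differ
termwise by at most `‖f‖ C ‖x - y‖`. A continuous function vanishing on a dense set vanishes
everywhere.
-/

open Filter

theorem Real.liminf_le_liminf_add {ι : Type*} {l : Filter ι} [l.NeBot] {u v : ι → ℝ} {c : ℝ}
    (hu : IsBoundedUnder (· ≥ ·) l u) (hv_le : IsBoundedUnder (· ≤ ·) l v)
    (hv_ge : IsBoundedUnder (· ≥ ·) l v) (huv : ∀ᶠ i in l, u i ≤ v i + c) :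
    liminf u l ≤ liminf v l + c := by
  rw [← liminf_add_const l v c hv_le.isCoboundedUnder_ge hv_ge]
  exact liminf_le_liminf huv hu
    (isBoundedUnder_le_add hv_le isBoundedUnder_const).isCoboundedUnder_ge

section PowerBounded

variable {𝕜 X F : Type*} [NontriviallyNormedField 𝕜] [SeminormedAddCommGroup X]
  [NormedSpace 𝕜 X] [SeminormedAddCommGroup F] [NormedSpace 𝕜 F] {T : X →L[𝕜] X} {C : ℝ}

theorem norm_apply_pow_apply_le (hC : ∀ n, ‖T ^ n‖ ≤ C) (f : X →L[𝕜] F) (x : X) (n : ℕ) :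
    ‖f ((T ^ n) x)‖ ≤ ‖f‖ * C * ‖x‖ :=
  calc ‖f ((T ^ n) x)‖ ≤ ‖f‖ * (‖T ^ n‖ * ‖x‖) :=
        f.le_of_opNorm_le_of_le le_rfl ((T ^ n).le_opNorm x)
    _ ≤ ‖f‖ * (C * ‖x‖) := by gcongr; exact hC n
    _ = ‖f‖ * C * ‖x‖ := (mul_assoc _ _ _).symm

theorem lipschitzWith_liminf_norm_apply_pow_apply (hC : ∀ n, ‖T ^ n‖ ≤ C) (f : X →L[𝕜] F) :
    LipschitzWith (‖f‖ * C).toNNReal fun x => liminf (fun n => ‖f ((T ^ n) x)‖) atTop := by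
  refine LipschitzWith.of_le_add_mul' _ fun x y => Real.liminf_le_liminf_add ?_ ?_ ?_ ?_
  · exact isBoundedUnder_of ⟨0, fun n => norm_nonneg _⟩
  · exact isBoundedUnder_of ⟨‖f‖ * C * ‖y‖, norm_apply_pow_apply_le hC f y⟩
  · exact isBoundedUnder_of ⟨0, fun n => norm_nonneg _⟩
  · refine Eventually.of_forall fun n => ?_
    calc ‖f ((T ^ n) x)‖ ≤ ‖f ((T ^ n) y)‖ + ‖f ((T ^ n) (x - y))‖ := by
          rw [map_sub, map_sub]; exact norm_le_insert' _ _
      _ ≤ ‖f ((T ^ n) y)‖ + ‖f‖ * C * dist x y := by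
          rw [dist_eq_norm]; gcongr; exact norm_apply_pow_apply_le hC f _ n

end PowerBounded

/-- If `T` is a power bounded operator on a normed space `X` and `D ⊆ X` is a dense
subset with `liminf_n |f(T^n y)| = 0` for every `y ∈ D` and every `f ∈ X*`, then
`liminf_n |f(T^n x)| = 0` for every `x ∈ X` and every `f ∈ X*`, i.e. `T` is weakly
quasistable. -/
theorem weakly_quasistable_of_dense {𝕜 X : Type*} [RCLike 𝕜]
    [NormedAddCommGroup X] [NormedSpace 𝕜 X] (T : X →L[𝕜] X)
    (hpb : ∃ C : ℝ, ∀ n : ℕ, ‖T ^ n‖ ≤ C) (D : Set X) (hD : Dense D)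
    (h : ∀ y ∈ D, ∀ f : X →L[𝕜] 𝕜,
      Filter.liminf (fun n : ℕ => ‖f ((T ^ n) y)‖) Filter.atTop = 0) :
    ∀ (x : X) (f : X →L[𝕜] 𝕜),
      Filter.liminf (fun n : ℕ => ‖f ((T ^ n) x)‖) Filter.atTop = 0 := by
  obtain ⟨C, hC⟩ := hpb
  intro x f
  have hcont := (lipschitzWith_liminf_norm_apply_pow_apply hC f).continuous
  exact congrFun (hcont.ext_on hD continuous_const fun y hy => h y hy f) x
end

section
/- Let T be a weakly l-sequentially supercyclic operator on a normed space X. If T is weakly stable, then for every y ∈ Y_T, every x ∈ X \ O_T([y]), every scalar sequence {α_k}, and every strictly increasing sequence of nonnegative integers {n_k} such that f(α_k T^{n_k} y) → f(x) for every f ∈ X*, the scalar sequence {α_k} is unbounded. Equivalently, if for some y ∈ Y_T and some x ∈ X \ O_T([y]) there exist such witnessing sequences with {α_k} bounded, then T is not weakly stable. -/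
open Filter

/-- `y` is a weakly l-sequentially supercyclic vector for `T`: every `x ∈ X` is the
weak limit of a sequence `α_k T^{n_k} y` taken from the projective orbit of `y`. -/
def IsWeaklyLSeqSupercyclicVector {𝕜 X : Type*} [RCLike 𝕜] [NormedAddCommGroup X]
    [NormedSpace 𝕜 X] (T : X →L[𝕜] X) (y : X) : Prop :=
  y ≠ 0 ∧ ∀ x : X, ∃ (α : ℕ → 𝕜) (nk : ℕ → ℕ),
    ∀ f : X →L[𝕜] 𝕜,
      Tendsto (fun k => f (α k • (T ^ nk k) y)) atTop (nhds (f x))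

/-- The projective orbit `O_T([y]) = {α T^n y : α ∈ 𝕜, n ≥ 0}` of `y` under `T`. -/
def projectiveOrbit {𝕜 X : Type*} [RCLike 𝕜] [NormedAddCommGroup X]
    [NormedSpace 𝕜 X] (T : X →L[𝕜] X) (y : X) : Set X :=
  {v | ∃ (α : 𝕜) (n : ℕ), v = α • (T ^ n) y}

/-! Bounded scalar multiples of a weakly null sequence are weakly null, so under weak
stability a weak limit of `α_k T^{n_k} y` with bounded `α_k` must be `0`, and `0` lies in
every projective orbit. -/

def IsWeaklyStable {𝕜 X : Type*} [RCLike 𝕜] [NormedAddCommGroup X] [NormedSpace 𝕜 X]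
    (T : X →L[𝕜] X) : Prop :=
  ∀ (x : X) (f : X →L[𝕜] 𝕜), Tendsto (fun n : ℕ => f ((T ^ n) x)) atTop (nhds 0)

theorem zero_mem_projectiveOrbit {𝕜 X : Type*} [RCLike 𝕜] [NormedAddCommGroup X]
    [NormedSpace 𝕜 X] (T : X →L[𝕜] X) (y : X) : (0 : X) ∈ projectiveOrbit T y :=
  ⟨0, 0, (zero_smul 𝕜 _).symm⟩

section WeaklyStable

variable {𝕜 X ι : Type*} [RCLike 𝕜] [NormedAddCommGroup X] [NormedSpace 𝕜 X]
  {T : X →L[𝕜] X} {l : Filter ι}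

theorem IsWeaklyStable.tendsto_dual_smul_pow_zero (hT : IsWeaklyStable T) {α : ι → 𝕜}
    (hα : ∃ C : ℝ, ∀ i, ‖α i‖ ≤ C) {nk : ι → ℕ} (hnk : Tendsto nk l atTop) (y : X)
    (f : X →L[𝕜] 𝕜) : Tendsto (fun i => f (α i • (T ^ nk i) y)) l (nhds 0) := by
  simp only [map_smul, smul_eq_mul]
  exact (isBoundedUnder_of hα).smul_tendsto_zero ((hT y f).comp hnk)

theorem IsWeaklyStable.eq_zero_of_forall_tendsto_dual_smul_pow [l.NeBot]
    (hT : IsWeaklyStable T) {α : ι → 𝕜} (hα : ∃ C : ℝ, ∀ i, ‖α i‖ ≤ C) {nk : ι → ℕ}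
    (hnk : Tendsto nk l atTop) {x y : X}
    (hx : ∀ f : X →L[𝕜] 𝕜, Tendsto (fun i => f (α i • (T ^ nk i) y)) l (nhds (f x))) :
    x = 0 :=
  SeparatingDual.eq_zero_of_forall_dual_eq_zero fun f =>
    tendsto_nhds_unique (hx f) (hT.tendsto_dual_smul_pow_zero hα hnk y f)

end WeaklyStable

theorem unbounded_scalars_of_weakly_stable_general {𝕜 X : Type*}
    [RCLike 𝕜] [NormedAddCommGroup X] [NormedSpace 𝕜 X] (T : X →L[𝕜] X)
    (hstab : ∀ (x : X) (f : X →L[𝕜] 𝕜),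
      Tendsto (fun n : ℕ => f ((T ^ n) x)) atTop (nhds 0)) :
    ∀ y : X, IsWeaklyLSeqSupercyclicVector T y →
      ∀ x ∉ projectiveOrbit T y, ∀ (α : ℕ → 𝕜) (nk : ℕ → ℕ), StrictMono nk →
        (∀ f : X →L[𝕜] 𝕜,
          Tendsto (fun k => f (α k • (T ^ nk k) y)) atTop (nhds (f x))) →
        ¬ ∃ C : ℝ, ∀ k, ‖α k‖ ≤ C := by
  intro y _ x hx α nk hmono hconv hα
  have hx0 : x = 0 :=
    IsWeaklyStable.eq_zero_of_forall_tendsto_dual_smul_pow hstab hα hmono.tendsto_atTop hconv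
  exact hx (hx0 ▸ zero_mem_projectiveOrbit T y)

/-- **Theorem 6.3.** Let `T` be a weakly l-sequentially supercyclic operator on a
normed space `X`. If `T` is weakly stable, then for every `y ∈ Y_T`, every
`x ∈ X \ O_T([y])`, and all witnessing sequences `{α_k}`, `{n_k}` (with `{n_k}`
strictly increasing) such that `α_k T^{n_k} y` converges weakly to `x`, the scalar
sequence `{α_k}` is unbounded. -/
theorem unbounded_scalars_of_weakly_stable {𝕜 X : Type*}
    [RCLike 𝕜] [NormedAddCommGroup X] [NormedSpace 𝕜 X] (T : X →L[𝕜] X)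
    (hsc : ∃ y : X, IsWeaklyLSeqSupercyclicVector T y)
    (hstab : ∀ (x : X) (f : X →L[𝕜] 𝕜),
      Tendsto (fun n : ℕ => f ((T ^ n) x)) atTop (nhds 0)) :
    ∀ y : X, IsWeaklyLSeqSupercyclicVector T y →
      ∀ x ∉ projectiveOrbit T y, ∀ (α : ℕ → 𝕜) (nk : ℕ → ℕ), StrictMono nk →
        (∀ f : X →L[𝕜] 𝕜,
          Tendsto (fun k => f (α k • (T ^ nk k) y)) atTop (nhds (f x))) →
        ¬ ∃ C : ℝ, ∀ k, ‖α k‖ ≤ C :=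
  unbounded_scalars_of_weakly_stable_general T hstab
end

section
/- There exist a complex Hilbert space H, a power bounded operator T on H, and a vector x ∈ H such that some strictly increasing sequence of nonnegative integers {n_k} satisfies ⟨T^{n_k} x, z⟩ → 0 for every z ∈ H, yet no strictly increasing sequence {m_k} with sup_k (m_{k+1} − m_k) < ∞ satisfies ⟨T^{m_k} x, z⟩ → 0 for every z ∈ H. That is, the existence of a subsequence of {T^n x} converging weakly to zero does not imply the existence of a boundedly spaced such subsequence. -/
/-!
Take the Foguel operator `T = [[S⋆, P_Λ], [0, S]]` on `ℓ²(ℕ) ⊕ ℓ²(ℕ)`, where `S` is the forward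
shift and `P_Λ` the coordinate projection onto `Λ = {4 ^ j}`, and let `x = e₀` in the second
summand. Then `T ^ n x` is `e_n` in the second summand plus, when `4 ^ j < n ≤ 2 * 4 ^ j + 1`,
the vector `e_{2 * 4 ^ j + 1 - n}` of the first summand: the mass that crossed over at `4 ^ j`
and walks back towards `0`. At the times `3 * 4 ^ k + 1` nothing has crossed over, so
`T ^ n x = e_n` tends weakly to zero along them. A sequence with gaps at most `M` meets every
window `(2 * 4 ^ j + 1 - M, 2 * 4 ^ j + 1]`, and there `T ^ n x` has a coordinate `1` among the
first `M` coordinates of the first summand, so it cannot tend weakly to zero.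

Since `Λ` more than doubles, each coordinate of `T ^ n u` is a shifted coordinate of `u` plus at
most one crossed-over coordinate; both pieces are restrictions of `u` along partial injections,
whence `‖T ^ n‖ ≤ 2`.
-/

open Filter Topology
open scoped ENNReal

namespace lp

section IndicatorComp

variable {ι κ E : Type*} [NormedAddCommGroup E] {p : ℝ≥0∞}

theorem sum_norm_indicator_comp_rpow_le (hp : 0 < p.toReal) (f : lp (fun _ : κ => E) p)
    {D : Set ι} {σ : ι → κ} (hσ : D.InjOn σ) (s : Finset ι) :
    ∑ i ∈ s, ‖D.indicator (f ∘ σ) i‖ ^ p.toReal ≤ ‖f‖ ^ p.toReal := by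
  classical
  calc ∑ i ∈ s, ‖D.indicator (f ∘ σ) i‖ ^ p.toReal
      = ∑ i ∈ s with i ∈ D, ‖f (σ i)‖ ^ p.toReal := by
        rw [Finset.sum_filter]
        refine Finset.sum_congr rfl fun i _ => ?_
        by_cases hi : i ∈ D
        · simp [hi]
        · simp [hi, Real.zero_rpow hp.ne']
    _ = ∑ j ∈ {i ∈ s | i ∈ D}.image σ, ‖f j‖ ^ p.toReal := by
        rw [Finset.sum_image fun _ hi _ hj h =>
          hσ (Finset.mem_filter.1 hi).2 (Finset.mem_filter.1 hj).2 h]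
    _ ≤ ‖f‖ ^ p.toReal := sum_rpow_le_norm_rpow hp f _

noncomputable def indicatorComp (hp : 0 < p.toReal) (f : lp (fun _ : κ => E) p) {D : Set ι}
    {σ : ι → κ} (hσ : D.InjOn σ) : lp (fun _ : ι => E) p :=
  ⟨D.indicator (f ∘ σ), memℓp_gen' (sum_norm_indicator_comp_rpow_le hp f hσ)⟩

@[simp]
theorem coe_indicatorComp (hp : 0 < p.toReal) (f : lp (fun _ : κ => E) p) {D : Set ι}
    {σ : ι → κ} (hσ : D.InjOn σ) : ⇑(indicatorComp hp f hσ) = D.indicator (f ∘ σ) :=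
  rfl

theorem norm_indicatorComp_le (hp : 0 < p.toReal) (f : lp (fun _ : κ => E) p) {D : Set ι}
    {σ : ι → κ} (hσ : D.InjOn σ) : ‖indicatorComp hp f hσ‖ ≤ ‖f‖ :=
  norm_le_of_forall_sum_le hp (norm_nonneg' f) (sum_norm_indicator_comp_rpow_le hp f hσ)

end IndicatorComp

theorem tendsto_norm_cofinite_zero {ι : Type*} {E : ι → Type*} [∀ i, NormedAddCommGroup (E i)]
    {p : ℝ≥0∞} (hp : 0 < p.toReal) (f : lp E p) :
    Tendsto (fun i => ‖f i‖) cofinite (𝓝 0) := by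
  have hpow := ((lp.memℓp f).summable hp).tendsto_cofinite_zero
  have hroot : Tendsto (fun x : ℝ => x ^ p.toReal⁻¹) (𝓝 0) (𝓝 0) := by
    simpa [Real.zero_rpow (inv_pos.2 hp).ne'] using
      (Real.continuousAt_rpow_const 0 p.toReal⁻¹ (Or.inr (inv_pos.2 hp).le)).tendsto
  refine (hroot.comp hpow).congr fun i => ?_
  simp [← Real.rpow_mul (norm_nonneg _), hp.ne']

end lp

theorem StrictMono.exists_ge_le_lt_add {m : ℕ → ℕ} (hm : StrictMono m) {M : ℕ}
    (hM : ∀ k, m (k + 1) - m k ≤ M) {K N : ℕ} (hKN : m K ≤ N) :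
    ∃ k ≥ K, m k ≤ N ∧ N < m k + M := by
  have hex : ∃ k, N < m k := ⟨N + 1, Nat.lt_of_lt_of_le (Nat.lt_succ_self N) (hm.id_le _)⟩
  have hK : K < Nat.find hex := hm.lt_iff_lt.1 (hKN.trans_lt (Nat.find_spec hex))
  refine ⟨Nat.find hex - 1, by omega, not_lt.1 (Nat.find_min hex (by omega)), ?_⟩
  have := hM (Nat.find hex - 1)
  rw [Nat.sub_add_cancel (by omega)] at this
  have := Nat.find_spec hex
  omega

namespace Foguel

open scoped Classical

variable (Λ : Set ℕ)

/-- The coordinates of `T ^ n u` for `T = [[S⋆, P_Λ], [0, S]]`; `inl` indexes the first summand.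
The term `ℓ` of the sum is the mass that moves forward in the second summand up to `ℓ ∈ Λ`,
crosses over, and moves backward in the first summand to `m`. -/
noncomputable def powApply (n : ℕ) (u : ℕ ⊕ ℕ → ℂ) : ℕ ⊕ ℕ → ℂ
  | .inl m => u (.inl (m + n)) + ∑ ℓ ∈ Finset.Ico m (m + n),
      if ℓ ∈ Λ ∧ m + n ≤ 2 * ℓ + 1 then u (.inr (2 * ℓ + 1 - (m + n))) else 0
  | .inr m => if n ≤ m then u (.inr (m - n)) else 0

@[simp]
theorem powApply_zero (u : ℕ ⊕ ℕ → ℂ) : powApply Λ 0 u = u := by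
  funext i
  cases i <;> simp [powApply]

theorem powApply_powApply_one (n : ℕ) (u : ℕ ⊕ ℕ → ℂ) :
    powApply Λ n (powApply Λ 1 u) = powApply Λ (n + 1) u := by
  funext i
  cases i with
  | inr m =>
    simp only [powApply]
    split_ifs <;> first | rfl | omega
  | inl m =>
    simp only [powApply]
    rw [Nat.Ico_succ_singleton, Finset.sum_singleton, ← add_assoc m n 1,
      Finset.sum_Ico_succ_top (by omega : m ≤ m + n)]
    have hterm : ∀ ℓ ∈ Finset.Ico m (m + n),
        (if ℓ ∈ Λ ∧ m + n ≤ 2 * ℓ + 1 then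
          (if 1 ≤ 2 * ℓ + 1 - (m + n) then u (.inr (2 * ℓ + 1 - (m + n) - 1)) else 0) else 0) =
        if ℓ ∈ Λ ∧ m + n + 1 ≤ 2 * ℓ + 1 then u (.inr (2 * ℓ + 1 - (m + n + 1))) else 0 := by
      intro ℓ _
      by_cases hℓ : ℓ ∈ Λ
      · simp only [hℓ, true_and, Nat.sub_sub]
        split_ifs <;> first | rfl | omega
      · simp [hℓ]
    rw [Finset.sum_congr rfl hterm]
    by_cases hN : m + n ∈ Λ
    · simp only [hN, add_le_add_iff_right, true_and, Nat.reduceSubDiff]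
      ring
    · simp [hN]

theorem powApply_add (n : ℕ) (u v : ℕ ⊕ ℕ → ℂ) :
    powApply Λ n (u + v) = powApply Λ n u + powApply Λ n v := by
  funext i
  cases i with
  | inl m =>
    simp only [powApply, Pi.add_apply]
    rw [← add_add_add_comm, ← Finset.sum_add_distrib]
    congr 1
    refine Finset.sum_congr rfl fun ℓ _ => ?_
    split_ifs <;> simp
  | inr m =>
    simp only [powApply, Pi.add_apply]
    split_ifs <;> simp

theorem powApply_smul (n : ℕ) (c : ℂ) (u : ℕ ⊕ ℕ → ℂ) :
    powApply Λ n (c • u) = c • powApply Λ n u := by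
  funext i
  cases i with
  | inl m =>
    simp only [powApply, Pi.smul_apply, smul_eq_mul, mul_add, Finset.mul_sum, mul_ite, mul_zero]
  | inr m =>
    simp only [powApply, Pi.smul_apply, smul_eq_mul, mul_ite, mul_zero]

def IsLacunary : Prop := ∀ a ∈ Λ, ∀ b ∈ Λ, a < b → 2 * a < b

/-- The summands of `powApply Λ n u (.inl m)` that can be nonzero. -/
def IsPivot (n m ℓ : ℕ) : Prop := ℓ ∈ Λ ∧ m ≤ ℓ ∧ ℓ < m + n ∧ m + n ≤ 2 * ℓ + 1

variable {Λ}

theorem IsPivot.eq_of_isLacunary (hΛ : IsLacunary Λ) {n m ℓ ℓ' : ℕ}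
    (h : IsPivot Λ n m ℓ) (h' : IsPivot Λ n m ℓ') : ℓ = ℓ' := by
  obtain ⟨hℓ, -, h₁, h₂⟩ := h
  obtain ⟨hℓ', -, h₁', h₂'⟩ := h'
  rcases lt_trichotomy ℓ ℓ' with hlt | heq | hlt
  · have := hΛ ℓ hℓ ℓ' hℓ' hlt
    omega
  · exact heq
  · have := hΛ ℓ' hℓ' ℓ hℓ hlt
    omega

theorem IsPivot.eq_of_source_eq (hΛ : IsLacunary Λ) {n m m' ℓ ℓ' : ℕ} (h : IsPivot Λ n m ℓ)
    (h' : IsPivot Λ n m' ℓ') (hs : 2 * ℓ + 1 - (m + n) = 2 * ℓ' + 1 - (m' + n)) : m = m' := by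
  obtain ⟨hℓ, h₀, h₁, h₂⟩ := h
  obtain ⟨hℓ', h₀', h₁', h₂'⟩ := h'
  rcases lt_trichotomy ℓ ℓ' with hlt | rfl | hlt
  · have := hΛ ℓ hℓ ℓ' hℓ' hlt
    omega
  · omega
  · have := hΛ ℓ' hℓ' ℓ hℓ hlt
    omega

variable (Λ)

noncomputable def pivot (n m : ℕ) : ℕ := if h : ∃ ℓ, IsPivot Λ n m ℓ then h.choose else 0

variable {Λ}

theorem isPivot_pivot {n m : ℕ} (h : ∃ ℓ, IsPivot Λ n m ℓ) : IsPivot Λ n m (pivot Λ n m) := by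
  rw [pivot, dif_pos h]
  exact h.choose_spec

theorem sum_Ico_eq_pivot (hΛ : IsLacunary Λ) (n m : ℕ) (f : ℕ → ℂ) :
    (∑ ℓ ∈ Finset.Ico m (m + n), if ℓ ∈ Λ ∧ m + n ≤ 2 * ℓ + 1 then f ℓ else 0) =
      if ∃ ℓ, IsPivot Λ n m ℓ then f (pivot Λ n m) else 0 := by
  split_ifs with h
  · have hp := isPivot_pivot h
    rw [Finset.sum_eq_single_of_mem (pivot Λ n m) (Finset.mem_Ico.2 ⟨hp.2.1, hp.2.2.1⟩)]
    · rw [if_pos ⟨hp.1, hp.2.2.2⟩]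
    · intro ℓ hℓ hne
      rw [if_neg]
      rintro ⟨hΛℓ, hℓn⟩
      obtain ⟨hmℓ, hℓm⟩ := Finset.mem_Ico.1 hℓ
      exact hne (IsPivot.eq_of_isLacunary hΛ ⟨hΛℓ, hmℓ, hℓm, hℓn⟩ hp)
  · refine Finset.sum_eq_zero fun ℓ hℓ => if_neg ?_
    rintro ⟨hΛℓ, hℓn⟩
    obtain ⟨hmℓ, hℓm⟩ := Finset.mem_Ico.1 hℓ
    exact h ⟨ℓ, hΛℓ, hmℓ, hℓm, hℓn⟩

def shiftDomain (n : ℕ) : Set (ℕ ⊕ ℕ) := {i | i.elim (fun _ => True) (n ≤ ·)}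

theorem injOn_shift (n : ℕ) : (shiftDomain n).InjOn (Sum.map (· + n) (· - n)) := by
  rintro (m | m) hm (m' | m') hm' h <;>
    simp only [shiftDomain, Set.mem_ofPred_eq, Sum.elim_inl, Sum.elim_inr, Sum.map_inl,
      Sum.map_inr, Sum.inl.injEq, Sum.inr.injEq, reduceCtorEq] at hm hm' h ⊢
  all_goals omega

variable (Λ) in
noncomputable def crossMap (n : ℕ) : ℕ ⊕ ℕ → ℕ ⊕ ℕ :=
  fun i => .inr (i.elim (fun m => 2 * pivot Λ n m + 1 - (m + n)) fun _ => 0)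

variable (Λ) in
def crossDomain (n : ℕ) : Set (ℕ ⊕ ℕ) :=
  {i | i.elim (fun m => ∃ ℓ, IsPivot Λ n m ℓ) fun _ => False}

theorem injOn_crossMap (hΛ : IsLacunary Λ) (n : ℕ) : (crossDomain Λ n).InjOn (crossMap Λ n) := by
  rintro (m | m) hm (m' | m') hm' h <;>
    simp only [crossDomain, Set.mem_ofPred_eq, Sum.elim_inl, Sum.elim_inr, crossMap,
      Sum.inr.injEq] at hm hm' h
  exact congrArg _ (IsPivot.eq_of_source_eq hΛ (isPivot_pivot hm) (isPivot_pivot hm') h)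

theorem powApply_eq_indicator_add_indicator (hΛ : IsLacunary Λ) (n : ℕ) (u : ℕ ⊕ ℕ → ℂ) :
    powApply Λ n u =
      (shiftDomain n).indicator (u ∘ Sum.map (· + n) (· - n)) +
        (crossDomain Λ n).indicator (u ∘ crossMap Λ n) := by
  funext i
  cases i with
  | inl m =>
    simp only [powApply, sum_Ico_eq_pivot hΛ, shiftDomain, crossDomain, Pi.add_apply,
      Set.indicator, Set.mem_ofPred_eq, Sum.elim_inl, ↓reduceIte, Function.comp_apply, Sum.map_inl,
      crossMap, add_right_inj]
    congr
  | inr m =>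
    simp only [powApply, shiftDomain, crossDomain, Pi.add_apply, Set.indicator,
      Set.mem_ofPred_eq, Sum.elim_inr, Function.comp_apply, Sum.map_inr, ↓reduceIte, add_zero]
    congr

abbrev L2 : Type := lp (fun _ : ℕ ⊕ ℕ => ℂ) 2

noncomputable def powLp (hΛ : IsLacunary Λ) (n : ℕ) (u : L2) : L2 :=
  lp.indicatorComp (by norm_num) u (injOn_shift n) +
    lp.indicatorComp (by norm_num) u (injOn_crossMap hΛ n)

theorem coe_powLp (hΛ : IsLacunary Λ) (n : ℕ) (u : L2) : ⇑(powLp hΛ n u) = powApply Λ n u := by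
  rw [powApply_eq_indicator_add_indicator hΛ, powLp, lp.coeFn_add, lp.coe_indicatorComp,
    lp.coe_indicatorComp]

theorem norm_powLp_le (hΛ : IsLacunary Λ) (n : ℕ) (u : L2) : ‖powLp hΛ n u‖ ≤ 2 * ‖u‖ :=
  calc ‖powLp hΛ n u‖ ≤ ‖u‖ + ‖u‖ :=
        (norm_add_le _ _).trans (add_le_add (lp.norm_indicatorComp_le _ _ _)
          (lp.norm_indicatorComp_le _ _ _))
    _ = 2 * ‖u‖ := (two_mul _).symm

noncomputable def op (hΛ : IsLacunary Λ) : L2 →L[ℂ] L2 :=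
  LinearMap.mkContinuous
    { toFun := powLp hΛ 1
      map_add' u v := lp.ext <| by simp only [coe_powLp, lp.coeFn_add, powApply_add]
      map_smul' c u := lp.ext <| by
        simp only [coe_powLp, lp.coeFn_smul, powApply_smul, RingHom.id_apply] }
    2 (norm_powLp_le hΛ 1)

theorem coe_op_pow_apply (hΛ : IsLacunary Λ) (n : ℕ) (u : L2) :
    ⇑((op hΛ ^ n) u) = powApply Λ n u := by
  induction n generalizing u with
  | zero => simp
  | succ n ih =>
    rw [pow_succ, mul_apply_eq_comp, ih, ← powApply_powApply_one]
    exact congrArg _ (coe_powLp hΛ 1 u)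

theorem norm_op_pow_le (hΛ : IsLacunary Λ) (n : ℕ) : ‖op hΛ ^ n‖ ≤ 2 :=
  ContinuousLinearMap.opNorm_le_bound _ zero_le_two fun u => by
    rw [show (op hΛ ^ n) u = powLp hΛ n u from lp.ext (by rw [coe_op_pow_apply, coe_powLp])]
    exact norm_powLp_le hΛ n u

theorem op_pow_single_eq_single {hΛ : IsLacunary Λ} {n : ℕ}
    (hn : ∀ ℓ ∈ Λ, n ∉ Set.Ioc ℓ (2 * ℓ + 1)) :
    (op hΛ ^ n) (lp.single 2 (.inr 0) 1) = lp.single 2 (.inr n) 1 := by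
  refine lp.ext (funext fun i => ?_)
  rw [coe_op_pow_apply]
  cases i with
  | inl m =>
    simp only [powApply, lp.coeFn_single, Pi.single_apply, reduceCtorEq, if_false, zero_add,
      Sum.inr.injEq]
    refine Finset.sum_eq_zero fun ℓ hℓ => ?_
    obtain ⟨hmℓ, -⟩ := Finset.mem_Ico.1 hℓ
    by_cases hℓΛ : ℓ ∈ Λ
    · have := hn ℓ hℓΛ
      rw [Set.mem_Ioc] at this
      split_ifs <;> first | rfl | omega
    · simp [hℓΛ]
  | inr m =>
    simp only [powApply, lp.coeFn_single, Pi.single_apply, Sum.inr.injEq]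
    split_ifs <;> first | rfl | omega

theorem op_pow_single_apply_inl_eq_one {hΛ : IsLacunary Λ} {n a ℓ : ℕ} (hℓ : ℓ ∈ Λ) (ha : a ≤ ℓ)
    (h : a + n = 2 * ℓ + 1) : (op hΛ ^ n) (lp.single 2 (.inr 0) 1) (.inl a) = 1 := by
  rw [coe_op_pow_apply]
  simp only [powApply, lp.coeFn_single, Pi.single_apply, reduceCtorEq, if_false, zero_add,
    Sum.inr.injEq]
  rw [Finset.sum_eq_single_of_mem ℓ (Finset.mem_Ico.2 ⟨ha, by omega⟩)]
  · simp [hℓ, h]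
  · intro ℓ' _ hne
    split_ifs <;> first | rfl | omega

theorem tendsto_inner_op_pow_single (hΛ : IsLacunary Λ) {n : ℕ → ℕ}
    (hn : Function.Injective n) (hfree : ∀ k, ∀ ℓ ∈ Λ, n k ∉ Set.Ioc ℓ (2 * ℓ + 1)) (z : L2) :
    Tendsto (fun k => inner ℂ ((op hΛ ^ n k) (lp.single 2 (.inr 0) 1)) z) atTop (𝓝 0) := by
  simp only [op_pow_single_eq_single (hfree _), lp.inner_single_left, RCLike.inner_apply,
    map_one, mul_one]
  have hz := tendsto_zero_iff_norm_tendsto_zero.2 (lp.tendsto_norm_cofinite_zero (by norm_num) z)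
  rw [← Nat.cofinite_eq_atTop]
  exact hz.comp (Sum.inr_injective.comp hn).tendsto_cofinite

theorem not_exists_boundedly_spaced_tendsto_inner (hΛ : IsLacunary Λ)
    (hunbdd : ∀ N, ∃ ℓ ∈ Λ, N ≤ ℓ) :
    ¬ ∃ m : ℕ → ℕ, StrictMono m ∧ (∃ M : ℕ, ∀ k, m (k + 1) - m k ≤ M) ∧ ∀ z : L2,
      Tendsto (fun k => inner ℂ ((op hΛ ^ m k) (lp.single 2 (.inr 0) 1)) z) atTop (𝓝 0) := by
  rintro ⟨m, hm, ⟨M, hM⟩, hconv⟩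
  have hsmall : ∀ᶠ k in atTop, ∀ a ∈ Finset.range M,
      ‖(op hΛ ^ m k) (lp.single 2 (.inr 0) 1) (.inl a)‖ < 1 := by
    refine (Finset.range M).eventually_all.2 fun a _ => ?_
    have ha := tendsto_zero_iff_norm_tendsto_zero.1 (hconv (lp.single 2 (.inl a) 1))
    simp only [lp.inner_single_right, RCLike.inner_apply, one_mul, RCLike.norm_conj] at ha
    exact ha.eventually_lt_const one_pos
  obtain ⟨K, hK⟩ := eventually_atTop.1 hsmall
  obtain ⟨ℓ, hℓ, hℓbig⟩ := hunbdd (m K + M)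
  obtain ⟨k, hKk, hk, hkM⟩ := hm.exists_ge_le_lt_add hM (show m K ≤ 2 * ℓ + 1 by omega)
  have := hK k hKk (2 * ℓ + 1 - m k) (Finset.mem_range.2 (by omega))
  rw [op_pow_single_apply_inl_eq_one hℓ (by omega) (by omega)] at this
  norm_num at this

theorem isLacunary_range_four_pow : IsLacunary (Set.range (4 ^ · : ℕ → ℕ)) := by
  rintro _ ⟨i, rfl⟩ _ ⟨j, rfl⟩ hlt
  dsimp only at hlt ⊢
  have := Nat.pow_le_pow_right (by norm_num : 0 < 4)
    ((Nat.pow_lt_pow_iff_right (by norm_num)).1 hlt)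
  rw [pow_succ] at this
  have : 0 < 4 ^ i := by positivity
  omega

end Foguel

theorem three_mul_four_pow_add_one_notMem_Ioc (j k : ℕ) :
    3 * 4 ^ k + 1 ∉ Set.Ioc (4 ^ j) (2 * 4 ^ j + 1) := by
  rw [Set.mem_Ioc]
  have : 0 < 4 ^ k := by positivity
  rcases le_or_gt j k with hjk | hkj
  · have := Nat.pow_le_pow_right (by norm_num : 0 < 4) hjk
    omega
  · have := Nat.pow_le_pow_right (by norm_num : 0 < 4) hkj
    rw [pow_succ] at this
    omega

/-- There exist a complex Hilbert space `H`, a power bounded operator `T` on `H`, and a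
vector `x ∈ H` such that some strictly increasing sequence `{n_k}` of nonnegative
integers satisfies `⟨T^{n_k} x, z⟩ → 0` for every `z ∈ H`, yet no strictly increasing
sequence `{m_k}` with bounded increments (`sup_k (m_{k+1} - m_k) < ∞`) satisfies
`⟨T^{m_k} x, z⟩ → 0` for every `z ∈ H`: the existence of a subsequence of `{T^n x}`
converging weakly to zero does not imply the existence of a boundedly spaced one. -/
theorem exists_weak_quasistability_without_boundedly_spaced_subsequence :
    ∃ (H : Type) (_ : NormedAddCommGroup H) (_ : InnerProductSpace ℂ H)
      (_ : CompleteSpace H) (T : H →L[ℂ] H) (x : H),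
      (∃ C : ℝ, ∀ n : ℕ, ‖T ^ n‖ ≤ C) ∧
      (∃ n : ℕ → ℕ, StrictMono n ∧ ∀ z : H,
        Tendsto (fun k => (inner ℂ ((T ^ n k) x) z : ℂ)) atTop (nhds 0)) ∧
      ¬ (∃ m : ℕ → ℕ, StrictMono m ∧ (∃ M : ℕ, ∀ k, m (k + 1) - m k ≤ M) ∧
        ∀ z : H,
          Tendsto (fun k => (inner ℂ ((T ^ m k) x) z : ℂ)) atTop (nhds 0)) := by
  have hΛ := Foguel.isLacunary_range_four_pow
  have hn : StrictMono fun k => 3 * 4 ^ k + 1 := fun a b hab => by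
    have := Nat.pow_lt_pow_right (by norm_num : 1 < 4) hab
    dsimp only
    omega
  refine ⟨Foguel.L2, inferInstance, inferInstance, inferInstance, Foguel.op hΛ,
    lp.single 2 (.inr 0) 1, ⟨2, Foguel.norm_op_pow_le hΛ⟩,
    ⟨_, hn, Foguel.tendsto_inner_op_pow_single hΛ hn.injective ?_⟩,
    Foguel.not_exists_boundedly_spaced_tendsto_inner hΛ fun N => ⟨4 ^ N, ⟨N, rfl⟩, ?_⟩⟩
  · rintro k _ ⟨j, rfl⟩
    exact three_mul_four_pow_add_one_notMem_Ioc j k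
  · exact (Nat.lt_pow_self (by norm_num)).le
end
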